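/- For the split-step implicit tau-leap scheme with linear propensities, if I − τA is invertible then the conditional expectation of one step from state z equals (I − τA)^{-1} z, and this mean iteration is asymptotically stable whenever all eigenvalues λ of A satisfy |1 − τλ| > 1; in particular it is stable for every τ > 0 when all eigenvalues have negative real part. -/

import Mathlib

/-!
Taking expectations in the Poisson step gives `E[Z] = z + τ A y`, and `z + τ A y = y` is just the
implicit equation `(I - τA) y = z` rearranged, so `E[Z] = (I - τA)⁻¹ z`. The spectrum of
`(I - τA)⁻¹` is `{(1 - τλ)⁻¹ : λ ∈ σ(A)}`, which lies in the open unit disc under the hypothesis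
`|1 - τλ| > 1`; by Gelfand's formula the powers of a matrix of spectral radius `< 1` tend to `0`.
Finally `|1 - τλ| ≥ Re(1 - τλ) = 1 - τ Re λ > 1` when `Re λ < 0`.
-/

open MeasureTheory Filter Topology Matrix
open scoped NNReal ENNReal

namespace spectrum

variable {𝕜 R : Type*} [NormedField 𝕜] [Ring R] [Algebra 𝕜 R] {a : R} {t : 𝕜}

lemma mem_one_sub_smul_iff (ht : t ≠ 0) {μ : 𝕜} :
    μ ∈ spectrum 𝕜 (1 - t • a) ↔ ∃ lam ∈ spectrum 𝕜 a, 1 - t * lam = μ := by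
  rw [← map_one (algebraMap 𝕜 R), ← singleton_sub_eq, ← Units.smul_mk0 ht, unit_smul_eq_smul]
  simp [Set.mem_smul_set]

lemma isUnit_one_sub_smul (ht : t ≠ 0) (h : ∀ lam ∈ spectrum 𝕜 a, 1 < ‖1 - t * lam‖) :
    IsUnit (1 - t • a) := by
  by_contra hu
  obtain ⟨lam, hlam, h0⟩ := (mem_one_sub_smul_iff ht).1 ((zero_mem_iff 𝕜).2 hu)
  have := h lam hlam
  rw [h0, norm_zero] at this
  exact one_pos.not_gt this

lemma norm_lt_one_of_mem_inverse_one_sub_smul (ht : t ≠ 0)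
    (h : ∀ lam ∈ spectrum 𝕜 a, 1 < ‖1 - t * lam‖) :
    ∀ w ∈ spectrum 𝕜 (Ring.inverse (1 - t • a)), ‖w‖ < 1 := by
  intro w hw
  obtain ⟨u, hu⟩ := isUnit_one_sub_smul ht h
  rw [← hu, Ring.inverse_unit, ← spectrum.map_inv, Set.mem_inv, hu] at hw
  obtain ⟨lam, hlam, hw⟩ := (mem_one_sub_smul_iff ht).1 hw
  have := h lam hlam
  rw [hw, norm_inv, one_lt_inv_iff₀] at this
  exact this.2

end spectrum

lemma tendsto_pow_atTop_nhds_zero_of_forall_spectrum_norm_lt_one {A : Type*} [NormedRing A]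
    [NormedAlgebra ℂ A] [CompleteSpace A] {a : A} (ha : ∀ w ∈ spectrum ℂ a, ‖w‖ < 1) :
    Tendsto (a ^ ·) atTop (𝓝 0) := by
  rcases subsingleton_or_nontrivial A with _ | _
  · simpa only [Subsingleton.elim _ (0 : A)] using tendsto_const_nhds
  have hρ : spectralRadius ℂ a < (1 : ℝ≥0) :=
    spectrum.spectralRadius_lt_of_forall_lt a fun w hw => by exact_mod_cast ha w hw
  obtain ⟨r, hρr, hr1⟩ := ENNReal.lt_iff_exists_nnreal_btwn.1 hρ
  have hr1 : (r : ℝ) < 1 := by exact_mod_cast hr1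
  have hbound : ∀ᶠ n : ℕ in atTop, ‖a ^ n‖ ≤ (r : ℝ) ^ n := by
    have hgelfand := spectrum.pow_nnnorm_pow_one_div_tendsto_nhds_spectralRadius a
    filter_upwards [hgelfand.eventually_lt_const hρr, eventually_ne_atTop 0] with n hn hn0
    rw [← ENNReal.coe_rpow_of_nonneg _ (by positivity), ENNReal.coe_lt_coe, one_div,
      NNReal.rpow_inv_lt_iff (by positivity)] at hn
    exact_mod_cast hn.le
  exact squeeze_zero_norm' hbound (tendsto_pow_atTop_nhds_zero_of_lt_one r.coe_nonneg hr1)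

namespace Matrix

section Stability

attribute [local instance] Matrix.linftyOpNormedRing Matrix.linftyOpNormedAlgebra

lemma tendsto_pow_mulVec_atTop_nhds_zero {n : Type*} [Fintype n] [DecidableEq n]
    {B : Matrix n n ℂ} (hB : ∀ w ∈ spectrum ℂ B, ‖w‖ < 1) (v : n → ℂ) :
    Tendsto (fun N : ℕ => (B ^ N) *ᵥ v) atTop (𝓝 0) := by
  have := FiniteDimensional.complete ℂ (Matrix n n ℂ)
  have h := ((continuous_id.matrix_mulVec (continuous_const (y := v))).tendsto 0).comp
    (tendsto_pow_atTop_nhds_zero_of_forall_spectrum_norm_lt_one hB)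
  rw [id, zero_mulVec] at h
  exact h

end Stability

variable {n ι R : Type*} [Fintype n] [CommRing R]

lemma sum_vecMulVec_mulVec (s : Finset ι) (u v : ι → n → R) (w : n → R) :
    (∑ j ∈ s, vecMulVec (u j) (v j)) *ᵥ w = ∑ j ∈ s, (v j ⬝ᵥ w) • u j := by
  simp only [sum_mulVec, vecMulVec_mulVec, op_smul_eq_smul]

lemma add_smul_mulVec_eq_of_one_sub_smul_mulVec_eq [DecidableEq n] {A : Matrix n n R} {t : R}
    {y z : n → R} (h : (1 - t • A) *ᵥ y = z) : z + t • A *ᵥ y = y := by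
  rw [← h, sub_mulVec, one_mulVec, smul_mulVec, sub_add_cancel]

end Matrix

lemma integral_const_add_sum_mul_const {Ω ι : Type*} [MeasurableSpace Ω] {μ : Measure Ω}
    [IsProbabilityMeasure μ] (s : Finset ι) (x : ℝ) {P : ι → Ω → ℝ}
    (hP : ∀ j ∈ s, Integrable (P j) μ) (w : ι → ℝ) :
    ∫ ω, (x + ∑ j ∈ s, P j ω * w j) ∂μ = x + ∑ j ∈ s, (∫ ω, P j ω ∂μ) * w j := by
  have hPw : ∀ j ∈ s, Integrable (fun ω => P j ω * w j) μ := fun j hj => (hP j hj).mul_const _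
  rw [integral_add (integrable_const x) (integrable_finsetSum s hPw), integral_const,
    probReal_univ, one_smul, integral_finsetSum s hPw]
  simp only [integral_mul_const]

lemma Complex.one_lt_norm_one_sub_ofReal_mul {t : ℝ} (ht : 0 < t) {z : ℂ} (hz : z.re < 0) :
    1 < ‖1 - t * z‖ := by
  have hre : (1 - t * z).re = 1 - t * z.re := by simp
  calc 1 < (1 - t * z).re := by rw [hre]; linarith [mul_neg_of_pos_of_neg ht hz]
    _ ≤ ‖1 - t * z‖ := re_le_norm _

theorem ssi_tl_mean_and_stability_general
    {Ω : Type*} [MeasurableSpace Ω] (μ : Measure Ω) [IsProbabilityMeasure μ]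
    (d J : ℕ) (ν c : Fin J → Fin d → ℝ) (τ : ℝ) (hτ : 0 < τ)
    (A : Matrix (Fin d) (Fin d) ℝ)
    (hA : A = ∑ j, Matrix.of fun i k => ν j i * c j k)
    (hinv : IsUnit (1 - τ • A))
    (z y : Fin d → ℝ)
    (hy : (1 - τ • A).mulVec y = z)
    (P : Fin J → Ω → ℝ)
    (hint : ∀ j, Integrable (P j) μ)
    (hmean : ∀ j, ∫ ω, P j ω ∂μ = (∑ i, c j i * y i) * τ) :
    (∀ i, (∫ ω, (z i + ∑ j, P j ω * ν j i) ∂μ) = ((1 - τ • A)⁻¹.mulVec z) i)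
    ∧ ((∀ lam ∈ spectrum ℂ (A.map (Complex.ofReal)),
          1 < ‖1 - (τ : ℂ) * lam‖) →
        ∀ v : Fin d → ℂ,
          Tendsto (fun N : ℕ => (((1 - (τ : ℂ) • A.map (Complex.ofReal))⁻¹) ^ N).mulVec v)
            atTop (nhds 0))
    ∧ ((∀ lam ∈ spectrum ℂ (A.map (Complex.ofReal)), lam.re < 0) →
        ∀ lam ∈ spectrum ℂ (A.map (Complex.ofReal)),
          1 < ‖1 - (τ : ℂ) * lam‖) := by
  refine ⟨fun i => ?_, fun hspec v => ?_, fun hre lam hlam => ?_⟩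
  · have hyz : (1 - τ • A)⁻¹ *ᵥ z = y := by
      rw [← hy, mulVec_mulVec, nonsing_inv_mul _ ((isUnit_iff_isUnit_det _).1 hinv), one_mulVec]
    have hstep := add_smul_mulVec_eq_of_one_sub_smul_mulVec_eq hy
    rw [show A = ∑ j, vecMulVec (ν j) (c j) from hA, sum_vecMulVec_mulVec] at hstep
    rw [integral_const_add_sum_mul_const _ _ (fun j _ => hint j), hyz, ← congrFun hstep i]
    simp only [hmean, Pi.add_apply, Pi.smul_apply, Finset.sum_apply, smul_eq_mul, Finset.mul_sum]
    exact congrArg _ (Finset.sum_congr rfl fun j _ => by rw [dotProduct]; ring)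
  · rw [nonsing_inv_eq_ringInverse]
    exact tendsto_pow_mulVec_atTop_nhds_zero
      (spectrum.norm_lt_one_of_mem_inverse_one_sub_smul (by exact_mod_cast hτ.ne') hspec) v
  · exact Complex.one_lt_norm_one_sub_ofReal_mul hτ (hre lam hlam)

/-- Split-step implicit tau-leap with linear propensities `a_j(x) = c_jᵀ x`:
if `I - τA` is invertible then the mean of one step from state `z` equals
`(I - τA)⁻¹ z`; the mean iteration is asymptotically stable whenever all
eigenvalues `λ` of `A` satisfy `|1 - τλ| > 1`; and this holds for every `τ > 0`
when all eigenvalues have negative real part. -/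
theorem ssi_tl_mean_and_stability
    {Ω : Type*} [MeasurableSpace Ω] (μ : Measure Ω) [IsProbabilityMeasure μ]
    (d J : ℕ) (ν c : Fin J → Fin d → ℝ) (τ : ℝ) (hτ : 0 < τ)
    (A : Matrix (Fin d) (Fin d) ℝ)
    (hA : A = ∑ j, Matrix.of fun i k => ν j i * c j k)
    (hinv : IsUnit (1 - τ • A))
    (z y : Fin d → ℝ)
    (hy : (1 - τ • A).mulVec y = z)
    (P : Fin J → Ω → ℝ)
    (hint : ∀ j, Integrable (P j) μ)
    (hrate_nonneg : ∀ j, 0 ≤ (∑ i, c j i * y i) * τ)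
    (hmean : ∀ j, ∫ ω, P j ω ∂μ = (∑ i, c j i * y i) * τ) :
    (∀ i, (∫ ω, (z i + ∑ j, P j ω * ν j i) ∂μ) = ((1 - τ • A)⁻¹.mulVec z) i)
    ∧ ((∀ lam ∈ spectrum ℂ (A.map (Complex.ofReal)),
          1 < ‖1 - (τ : ℂ) * lam‖) →
        ∀ v : Fin d → ℂ,
          Tendsto (fun N : ℕ => (((1 - (τ : ℂ) • A.map (Complex.ofReal))⁻¹) ^ N).mulVec v)
            atTop (nhds 0))
    ∧ ((∀ lam ∈ spectrum ℂ (A.map (Complex.ofReal)), lam.re < 0) →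
        ∀ lam ∈ spectrum ℂ (A.map (Complex.ofReal)),
          1 < ‖1 - (τ : ℂ) * lam‖) :=
  ssi_tl_mean_and_stability_general μ d J ν c τ hτ A hA hinv z y hy P hint hmean
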